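/- Let 𝓕_N(ψ) = (∑_{i=1}^N w(X_i) ψ(X_i)) / (∑_{i=1}^N w(X_i)) be the self-normalized importance-sampling estimator (defined to be 0 when the denominator vanishes). There exists a constant c > 0 depending only on the weight bound C and the bound M on |ψ| (in particular independent of N, λ, μ and ψ) such that for every N ≥ 1, E[(𝓕_N(ψ) − μ(ψ))²] ≤ c/N. (The quantitative bound Eq. (B.2) used in the proof of Theorem 1; its independence of the proposal gives the uniformity over previous-particle configurations required by the induction.) -/

import Mathlib

/-!
Write `T = ∑ w(Xᵢ) ψ(Xᵢ)`, `S = ∑ w(Xᵢ)` and `m = μ(ψ)`. The error `e = T / S - m` satisfies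
`|e| ≤ 2M` and `N e = (T - m S) + e (N - S)`, hence
`e² ≤ 2 (T - m S)² / N² + 8 M² (S - N)² / N²`.
Both `T - m S = ∑ w(Xᵢ) (ψ(Xᵢ) - m)` and `S - N = ∑ (w(Xᵢ) - 1)` are sums of `N` i.i.d. centred
variables, so their second moments are `N` times the `λ`-variances of `w (ψ - m)` and `w`.
Since `∫ w² f² dλ ≤ C ∫ w f² dλ = C μ(f²)`, these variances are at most `4 C M²` and `C`.
-/

open MeasureTheory ProbabilityTheory Finset

theorem sq_div_sub_le_of_abs_le {T S m M n : ℝ} (hS : 0 ≤ S) (hT : |T| ≤ M * S)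
    (hm : |m| ≤ M) (hn : 0 < n) :
    (T / S - m) ^ 2 ≤ 2 / n ^ 2 * (T - m * S) ^ 2 + 8 * M ^ 2 / n ^ 2 * (S - n) ^ 2 := by
  -- if `S = 0` then `T = 0` as well, so the junk value `T / 0 = 0` does no harm
  have hTS : T / S * S = T := by
    rcases hS.eq_or_lt with rfl | hS
    · simpa using (abs_nonpos_iff.mp (by simpa using hT)).symm
    · exact div_mul_cancel₀ T hS.ne'
  have hbound : |T / S - m| ≤ 2 * M := by
    have : |T / S| ≤ M := by
      rcases hS.eq_or_lt with rfl | hS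
      · simpa using (abs_nonneg m).trans hm
      · rw [abs_div, abs_of_pos hS, div_le_iff₀ hS]; exact hT
    linarith [abs_sub (T / S) m]
  have hsplit : n * (T / S - m) = (T - m * S) + (T / S - m) * (n - S) := by
    linear_combination hTS
  have hsq : (T / S - m) ^ 2 * (n - S) ^ 2 ≤ 4 * M ^ 2 * (n - S) ^ 2 := by
    have := sq_le_sq' (abs_le.mp hbound).1 (abs_le.mp hbound).2
    nlinarith [sq_nonneg (n - S)]
  rw [div_mul_eq_mul_div, div_mul_eq_mul_div, ← add_div, le_div_iff₀ (by positivity)]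
  calc (T / S - m) ^ 2 * n ^ 2 = (T - m * S + (T / S - m) * (n - S)) ^ 2 := by
        rw [← hsplit]; ring
    _ ≤ 2 * (T - m * S) ^ 2 + 2 * ((T / S - m) ^ 2 * (n - S) ^ 2) := by
        nlinarith [sq_nonneg (T - m * S - (T / S - m) * (n - S))]
    _ ≤ 2 * (T - m * S) ^ 2 + 8 * M ^ 2 * (S - n) ^ 2 := by nlinarith

section IID

variable {𝒳 Ω : Type*} [MeasurableSpace 𝒳] [MeasurableSpace Ω] {lam : Measure 𝒳}
  {P : Measure Ω} {X : ℕ → Ω → 𝒳}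

theorem memLp_sum_comp (hX : ∀ i, Measurable (X i)) (hmap : ∀ i, P.map (X i) = lam)
    {h : 𝒳 → ℝ} {p : ENNReal} (hp : MemLp h p lam) (N : ℕ) :
    MemLp (fun ω => ∑ i ∈ range N, h (X i ω)) p P :=
  memLp_finsetSum _ fun i _ => (hmap i ▸ hp).comp_of_map (hX i).aemeasurable

theorem variance_sum_comp_eq_mul_variance (hX : ∀ i, Measurable (X i))
    (hmap : ∀ i, P.map (X i) = lam) (hindep : iIndepFun X P) {h : 𝒳 → ℝ} (hh : Measurable h)
    (h2 : MemLp h 2 lam) (N : ℕ) :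
    variance (fun ω => ∑ i ∈ range N, h (X i ω)) P = N * variance h lam := by
  have hvar : ∀ i, variance (h ∘ X i) P = variance h lam := fun i => by
    rw [← variance_map (hmap i ▸ hh.aemeasurable) (hX i).aemeasurable, hmap i]
  have hsum := IndepFun.variance_sum (s := range N)
    (fun i _ => (hmap i ▸ h2).comp_of_map (hX i).aemeasurable)
    (fun i _ j _ hij => (hindep.indepFun hij).comp hh hh)
  simp only [hvar, sum_const, card_range, nsmul_eq_mul] at hsum
  rw [← hsum]
  congr 1; ext ω; simp [Finset.sum_apply]

theorem integral_sq_sum_comp_sub_eq_mul_variance [IsFiniteMeasure P]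
    (hX : ∀ i, Measurable (X i)) (hmap : ∀ i, P.map (X i) = lam) (hindep : iIndepFun X P)
    {h : 𝒳 → ℝ} (hh : Measurable h) (h2 : MemLp h 2 lam) (N : ℕ) :
    ∫ ω, (∑ i ∈ range N, h (X i ω) - N * ∫ x, h x ∂lam) ^ 2 ∂P = N * variance h lam := by
  have hcomp : ∀ i, ∫ ω, h (X i ω) ∂P = ∫ x, h x ∂lam := fun i => by
    rw [← hmap i, integral_map (hX i).aemeasurable (hmap i ▸ hh.aestronglyMeasurable)]
  have hmean : ∫ ω, ∑ i ∈ range N, h (X i ω) ∂P = N * ∫ x, h x ∂lam := by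
    rw [integral_finsetSum (f := fun i ω => h (X i ω)) _
      fun i _ => ((hmap i ▸ h2).comp_of_map (hX i).aemeasurable).integrable one_le_two]
    simp [hcomp]
  rw [← variance_sum_comp_eq_mul_variance hX hmap hindep hh h2 N,
    variance_eq_integral (by fun_prop), hmean]

theorem integral_sq_selfNormalized_sub_le [IsProbabilityMeasure P]
    (hX : ∀ i, Measurable (X i)) (hmap : ∀ i, P.map (X i) = lam) (hindep : iIndepFun X P)
    {w ψ : 𝒳 → ℝ} {m M : ℝ} (hw : Measurable w) (hw0 : ∀ x, 0 ≤ w x) (hψ : Measurable ψ)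
    (hψM : ∀ x, |ψ x| ≤ M) (hm : |m| ≤ M) (hw2 : MemLp w 2 lam)
    (hg2 : MemLp (fun x => w x * (ψ x - m)) 2 lam) (hw1 : ∫ x, w x ∂lam = 1)
    (hg0 : ∫ x, w x * (ψ x - m) ∂lam = 0) {N : ℕ} (hN : 0 < N) :
    ∫ ω, ((∑ i ∈ range N, w (X i ω) * ψ (X i ω)) / (∑ i ∈ range N, w (X i ω)) - m) ^ 2 ∂P
      ≤ 2 / N * variance (fun x => w x * (ψ x - m)) lam + 8 * M ^ 2 / N * variance w lam := by
  set g : 𝒳 → ℝ := fun x => w x * (ψ x - m)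
  set T : Ω → ℝ := fun ω => ∑ i ∈ range N, w (X i ω) * ψ (X i ω)
  set S : Ω → ℝ := fun ω => ∑ i ∈ range N, w (X i ω)
  have hsumg : ∀ ω, ∑ i ∈ range N, g (X i ω) = T ω - m * S ω := fun ω => by
    rw [mul_sum, ← sum_sub_distrib]
    exact sum_congr rfl fun i _ => by ring
  have hg : Measurable g := hw.mul (hψ.sub measurable_const)
  have hvar_g := integral_sq_sum_comp_sub_eq_mul_variance hX hmap hindep hg hg2 N
  have hvar_w := integral_sq_sum_comp_sub_eq_mul_variance hX hmap hindep hw hw2 N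
  simp only [hg0, hw1, mul_zero, sub_zero, mul_one, hsumg] at hvar_g hvar_w
  have hint_g : Integrable (fun ω => (T ω - m * S ω) ^ 2) P := by
    simpa only [hsumg] using (memLp_sum_comp hX hmap hg2 N).integrable_sq
  have hint_w : Integrable (fun ω => (S ω - N) ^ 2) P :=
    ((memLp_sum_comp hX hmap hw2 N).sub (memLp_const (N : ℝ))).integrable_sq
  have hN' : (0 : ℝ) < N := by exact_mod_cast hN
  have hbound : ∀ ω, (T ω / S ω - m) ^ 2
      ≤ 2 / N ^ 2 * (T ω - m * S ω) ^ 2 + 8 * M ^ 2 / N ^ 2 * (S ω - N) ^ 2 := fun ω => by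
    refine sq_div_sub_le_of_abs_le (sum_nonneg fun i _ => hw0 _) ?_ hm hN'
    rw [mul_sum]
    refine (abs_sum_le_sum_abs _ _).trans (sum_le_sum fun i _ => ?_)
    rw [abs_mul, abs_of_nonneg (hw0 _), mul_comm]
    exact mul_le_mul_of_nonneg_right (hψM _) (hw0 _)
  calc ∫ ω, (T ω / S ω - m) ^ 2 ∂P
      ≤ ∫ ω, (2 / N ^ 2 * (T ω - m * S ω) ^ 2 + 8 * M ^ 2 / N ^ 2 * (S ω - N) ^ 2) ∂P :=
        integral_mono_of_nonneg (ae_of_all _ fun ω => sq_nonneg _)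
          ((hint_g.const_mul _).add (hint_w.const_mul _)) (ae_of_all _ hbound)
    _ = 2 / N * variance g lam + 8 * M ^ 2 / N * variance w lam := by
      rw [integral_add (hint_g.const_mul _) (hint_w.const_mul _), integral_const_mul,
        integral_const_mul, hvar_g, hvar_w]
      field_simp

end IID

section Weight

variable {𝒳 : Type*} [MeasurableSpace 𝒳] {lam : Measure 𝒳} {w f : 𝒳 → ℝ} {C K : ℝ}

theorem integral_withDensity_ofReal_eq_integral_mul (hw : Measurable w) (hw0 : 0 ≤ᵐ[lam] w)
    (f : 𝒳 → ℝ) :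
    ∫ x, f x ∂lam.withDensity (fun x => ENNReal.ofReal (w x)) = ∫ x, w x * f x ∂lam := by
  rw [integral_withDensity_eq_integral_toReal_smul hw.ennreal_ofReal
    (ae_of_all _ fun _ => ENNReal.ofReal_lt_top)]
  refine integral_congr_ae ?_
  filter_upwards [hw0] with x hx
  simp [ENNReal.toReal_ofReal hx]

theorem memLp_mul_of_ae_le [IsFiniteMeasure lam] (hw : AEStronglyMeasurable w lam)
    (hf : AEStronglyMeasurable f lam) (hw0 : 0 ≤ᵐ[lam] w) (hwC : ∀ᵐ x ∂lam, w x ≤ C)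
    (hfK : ∀ x, |f x| ≤ K) (p : ENNReal) : MemLp (fun x => w x * f x) p lam := by
  refine MemLp.of_bound (hw.mul hf) (C * K) ?_
  filter_upwards [hw0, hwC] with x h0 hC
  rw [Real.norm_eq_abs, abs_mul, abs_of_nonneg h0]
  exact mul_le_mul hC (hfK x) (abs_nonneg _) (h0.trans hC)

theorem variance_mul_le [IsProbabilityMeasure lam] (hw : AEStronglyMeasurable w lam)
    (hf : AEStronglyMeasurable f lam) (hw0 : 0 ≤ᵐ[lam] w) (hwC : ∀ᵐ x ∂lam, w x ≤ C)
    (hfK : ∀ x, |f x| ≤ K) :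
    variance (fun x => w x * f x) lam ≤ C * K ^ 2 * ∫ x, w x ∂lam := by
  have hw_int : Integrable w lam := Integrable.of_bound hw C <| by
    filter_upwards [hw0, hwC] with x h0 hC
    rwa [Real.norm_of_nonneg h0]
  refine (variance_le_expectation_sq (hw.mul hf)).trans ?_
  rw [← integral_const_mul]
  refine integral_mono_of_nonneg (ae_of_all _ fun x => sq_nonneg _) (hw_int.const_mul _) ?_
  filter_upwards [hw0, hwC] with x h0 hC
  have hC0 : 0 ≤ C := h0.trans hC
  have hf2 : f x ^ 2 ≤ K ^ 2 := sq_le_sq' (abs_le.mp (hfK x)).1 (abs_le.mp (hfK x)).2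
  calc (w x * f x) ^ 2 = w x * (w x * f x ^ 2) := by ring
    _ ≤ w x * (C * K ^ 2) := by gcongr
    _ = C * K ^ 2 * w x := by ring

end Weight

theorem selfNormalizedIS_MSE_bound_general (C M : ℝ) (hC : 0 < C) :
    ∃ c : ℝ, 0 < c ∧
      ∀ (𝒳 : Type) (_ : MeasurableSpace 𝒳)
        (lam mu : Measure 𝒳), IsProbabilityMeasure lam → IsProbabilityMeasure mu →
        ∀ (w : 𝒳 → ℝ), Measurable w → (∀ x, 0 ≤ w x) →
        mu = lam.withDensity (fun x => ENNReal.ofReal (w x)) →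
        (∀ᵐ x ∂lam, w x ≤ C) →
        ∀ (ψ : 𝒳 → ℝ), Measurable ψ → (∀ x, |ψ x| ≤ M) →
        ∀ (Ω : Type) (_ : MeasurableSpace Ω)
          (P : Measure Ω), IsProbabilityMeasure P →
        ∀ (X : ℕ → Ω → 𝒳), (∀ i, Measurable (X i)) →
          (∀ i, P.map (X i) = lam) →
          iIndepFun X P →
        ∀ N : ℕ, 1 ≤ N →
          ∫ ω, ((∑ i ∈ Finset.range N, w (X i ω) * ψ (X i ω)) /
                  (∑ i ∈ Finset.range N, w (X i ω)) - ∫ x, ψ x ∂mu) ^ 2 ∂P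
            ≤ c / N := by
  refine ⟨16 * C * M ^ 2 + 1, by positivity, ?_⟩
  intro 𝒳 _ lam mu _ _ w hw hw0 hmuw hwC ψ hψ hψM Ω _ P _ X hX hmap hindep N hN
  set m := ∫ x, ψ x ∂mu
  have hw0' : 0 ≤ᵐ[lam] w := ae_of_all _ hw0
  have hmu : ∀ f : 𝒳 → ℝ, ∫ x, f x ∂mu = ∫ x, w x * f x ∂lam := fun f => by
    rw [hmuw, integral_withDensity_ofReal_eq_integral_mul hw hw0']
  have hw1 : ∫ x, w x ∂lam = 1 := by simpa using (hmu fun _ => 1).symm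
  have hψM' : ∀ᵐ x ∂mu, ‖ψ x‖ ≤ M := ae_of_all _ hψM
  have hm : |m| ≤ M := by simpa using norm_integral_le_of_norm_le_const hψM'
  have hg0 : ∫ x, w x * (ψ x - m) ∂lam = 0 := by
    rw [← hmu, integral_sub (Integrable.of_bound hψ.aestronglyMeasurable M hψM')
      (integrable_const m), integral_const]
    simp [m]
  have hψm : ∀ x, |ψ x - m| ≤ 2 * M := fun x => (abs_sub _ _).trans (by linarith [hψM x])
  have hone : ∀ x : 𝒳, |(1 : ℝ)| ≤ 1 := fun _ => abs_one.le
  have hψm_meas : AEStronglyMeasurable (fun x => ψ x - m) lam :=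
    (hψ.sub measurable_const).aestronglyMeasurable
  have hw_meas := hw.aestronglyMeasurable (μ := lam)
  have hw2 : MemLp w 2 lam := by
    simpa using memLp_mul_of_ae_le hw_meas aestronglyMeasurable_const hw0' hwC hone 2
  have hvar_g := variance_mul_le hw_meas hψm_meas hw0' hwC hψm
  have hvar_w := variance_mul_le hw_meas aestronglyMeasurable_const hw0' hwC hone
  simp only [mul_one, hw1, one_pow] at hvar_g hvar_w
  calc _ ≤ 2 / N * variance (fun x => w x * (ψ x - m)) lam + 8 * M ^ 2 / N * variance w lam :=
        integral_sq_selfNormalized_sub_le hX hmap hindep hw hw0 hψ hψM hm hw2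
          (memLp_mul_of_ae_le hw_meas hψm_meas hw0' hwC hψm 2) hw1 hg0 hN
    _ ≤ 2 / N * (C * (2 * M) ^ 2) + 8 * M ^ 2 / N * C := by gcongr
    _ ≤ (16 * C * M ^ 2 + 1) / N := by
        rw [div_mul_eq_mul_div, div_mul_eq_mul_div, ← add_div]
        exact div_le_div_of_nonneg_right (by nlinarith) (Nat.cast_nonneg N)

/-- **Quantitative bound Eq. (B.2):** there is a constant `c > 0` depending only on the
weight bound `C` and the bound `M` on `|ψ|` (independent of `N`, `λ`, `μ` and `ψ`) such
that the MSE of the self-normalized importance-sampling estimator is at most `c / N`. -/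
theorem selfNormalizedIS_MSE_bound (C M : ℝ) (hC : 0 < C) (hM : 0 ≤ M) :
    ∃ c : ℝ, 0 < c ∧
      ∀ (𝒳 : Type) (_ : MeasurableSpace 𝒳)
        (lam mu : Measure 𝒳), IsProbabilityMeasure lam → IsProbabilityMeasure mu →
        ∀ (w : 𝒳 → ℝ), Measurable w → (∀ x, 0 ≤ w x) →
        mu = lam.withDensity (fun x => ENNReal.ofReal (w x)) →
        (∀ᵐ x ∂lam, w x ≤ C) →
        ∀ (ψ : 𝒳 → ℝ), Measurable ψ → (∀ x, |ψ x| ≤ M) →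
        ∀ (Ω : Type) (_ : MeasurableSpace Ω)
          (P : Measure Ω), IsProbabilityMeasure P →
        ∀ (X : ℕ → Ω → 𝒳), (∀ i, Measurable (X i)) →
          (∀ i, P.map (X i) = lam) →
          iIndepFun X P →
        ∀ N : ℕ, 1 ≤ N →
          ∫ ω, ((∑ i ∈ Finset.range N, w (X i ω) * ψ (X i ω)) /
                  (∑ i ∈ Finset.range N, w (X i ω)) - ∫ x, ψ x ∂mu) ^ 2 ∂P
            ≤ c / N :=
  selfNormalizedIS_MSE_bound_general C M hC
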